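/- Let Ω ⊆ ℝ^d be open with nonempty boundary and let x ∈ ∂Ω be an LCDD boundary point in standard position. Then T^B_x(closure(Ω)) equals the closure of F̃_x(Ω), the interior of T^B_x(closure(Ω)) equals the interior of F̃_x(Ω), and the topological frontier of T^B_x(closure(Ω)) equals the topological frontier of F̃_x(Ω). -/

import Mathlib

open Set Topology Filter MeasureTheory

noncomputable section

/-- The epigraph of `γ : ℝ^{d-1} → ℝ`, as a subset of `ℝ^d ≃ ℝ^{d-1} × ℝ`. -/
def epi {n : ℕ} (γ : EuclideanSpace ℝ (Fin n) → ℝ) : Set (EuclideanSpace ℝ (Fin n) × ℝ) :=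
  {y | γ y.1 ≤ y.2}

/-- The strict epigraph of `γ`. -/
def epiStrict {n : ℕ} (γ : EuclideanSpace ℝ (Fin n) → ℝ) : Set (EuclideanSpace ℝ (Fin n) × ℝ) :=
  {y | γ y.1 < y.2}

/-- The Bouligand tangent cone of `A` at `a`: `0` together with all `v ≠ 0` such that there is a
sequence `(u m)` in `A` with `u m ≠ a`, `u m → a`, and `(u m - a)/‖u m - a‖ → v/‖v‖`. -/
def bouligand {E : Type*} [NormedAddCommGroup E] [NormedSpace ℝ E] (A : Set E) (a : E) :
    Set E :=
  {0} ∪ {v | v ≠ 0 ∧ ∃ u : ℕ → E, (∀ m, u m ∈ A) ∧ (∀ m, u m ≠ a) ∧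
    Tendsto u atTop (nhds a) ∧
    Tendsto (fun m => ‖u m - a‖⁻¹ • (u m - a)) atTop (nhds (‖v‖⁻¹ • v))}

/-- The open feasible direction cone of `Ω` at `x`. -/
def feasible {E : Type*} [AddCommGroup E] [Module ℝ E] (Ω : Set E) (x : E) : Set E :=
  {v | ∃ tv > (0 : ℝ), ∀ t ∈ Set.Ioo (0 : ℝ) tv, x + t • v ∈ Ω}

/-!
Near `x`, `closure Ω` and `Ω` are the epigraph and the strict epigraph of `γ`, so both cones at
`x` only see `γ`. Since `γ` is Lipschitz, its one-sided directional derivative `g` is a Hadamard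
derivative: the difference quotients `(γ (x' + t z) - γ x') / t` tend to `g v` as `t → 0⁺` and
`z → v` jointly. Writing points near `x` as `x + t z`, this makes the Bouligand cone exactly
`epi g`, and squeezes the feasible cone between `epiStrict g` and `epi g`. As `g` is continuous,
`epiStrict g` is the interior of `epi g` and `epi g` the closure of `epiStrict g`, which forces
the three equalities.
-/

theorem Filter.eventuallyEq_of_inter_eq {α : Type*} {l : Filter α} {s t u : Set α} (hu : u ∈ l)
    (h : s ∩ u = t ∩ u) : s =ᶠ[l] t := by
  refine eventuallyEq_set.2 ?_
  filter_upwards [hu] with y hy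
  simpa [hy] using Set.ext_iff.1 h y

theorem closure_interior_frontier_eq_of_subset_of_subset {X : Type*} [TopologicalSpace X]
    {O F C : Set X} (hOF : O ⊆ F) (hFC : F ⊆ C) (hO : closure O = C) (hC : interior C = O) :
    closure F = C ∧ interior F = interior C ∧ frontier F = frontier C := by
  have hCC : closure C = C := by rw [← hO, closure_closure]
  have hclF : closure F = C :=
    (hCC ▸ closure_mono hFC).antisymm (hO ▸ closure_mono hOF)
  have hintF : interior F = interior C :=
    (interior_mono hFC).antisymm (interior_maximal (hC ▸ hOF) isOpen_interior)
  exact ⟨hclF, hintF, by rw [frontier, frontier, hclF, hintF, hCC]⟩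

section Epigraph

variable {n : ℕ}

theorem epiStrict_subset_epi (g : EuclideanSpace ℝ (Fin n) → ℝ) : epiStrict g ⊆ epi g :=
  fun _ hv => le_of_lt (α := ℝ) hv

theorem closure_epiStrict {g : EuclideanSpace ℝ (Fin n) → ℝ} (hg : Continuous g) :
    closure (epiStrict g) = epi g := by
  refine (closure_minimal (epiStrict_subset_epi g)
    (isClosed_le (hg.comp continuous_fst) continuous_snd)).antisymm fun v hv => ?_
  have hv2 : v.2 ∈ closure (Ioi (g v.1)) := by rw [closure_Ioi]; exact hv
  exact map_mem_closure (continuous_const.prodMk continuous_id) hv2 fun _ hs => hs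

theorem interior_epi {g : EuclideanSpace ℝ (Fin n) → ℝ} (hg : Continuous g) :
    interior (epi g) = epiStrict g := by
  refine Subset.antisymm (fun v hv => ?_) (interior_maximal (epiStrict_subset_epi g)
    (isOpen_lt (hg.comp continuous_fst) continuous_snd))
  have hv2 : v.2 ∈ interior (Ici (g v.1)) :=
    preimage_interior_subset_interior_preimage (continuous_const.prodMk continuous_id) hv
  rw [interior_Ici] at hv2
  exact hv2

variable {γ : EuclideanSpace ℝ (Fin n) → ℝ} {x v : EuclideanSpace ℝ (Fin n) × ℝ} {t : ℝ}

theorem add_smul_mem_epi_iff (hx : x.2 = γ x.1) (ht : 0 < t) :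
    x + t • v ∈ epi γ ↔ (γ (x.1 + t • v.1) - γ x.1) / t ≤ v.2 := by
  change γ (x + t • v).1 ≤ (x + t • v).2 ↔ _
  simp only [Prod.fst_add, Prod.snd_add, Prod.smul_fst, Prod.smul_snd, smul_eq_mul, hx,
    div_le_iff₀ ht]
  constructor <;> intro <;> linarith

theorem add_smul_mem_epiStrict_iff (hx : x.2 = γ x.1) (ht : 0 < t) :
    x + t • v ∈ epiStrict γ ↔ (γ (x.1 + t • v.1) - γ x.1) / t < v.2 := by
  change γ (x + t • v).1 < (x + t • v).2 ↔ _
  simp only [Prod.fst_add, Prod.snd_add, Prod.smul_fst, Prod.smul_snd, smul_eq_mul, hx,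
    div_lt_iff₀ ht]
  constructor <;> intro <;> linarith

end Epigraph

section Cones

variable {E : Type*} [NormedAddCommGroup E] [NormedSpace ℝ E]

theorem tendsto_add_smul_nhds {α : Type*} {l : Filter α} {t : α → ℝ} {z : α → E} {a v : E}
    (ht : Tendsto t l (𝓝 0)) (hz : Tendsto z l (𝓝 v)) :
    Tendsto (fun m => a + t m • z m) l (𝓝 a) := by
  simpa using tendsto_const_nhds.add (ht.smul hz)

theorem mem_bouligand_iff {A : Set E} {a v : E} (hv : v ≠ 0) :
    v ∈ bouligand A a ↔ ∃ t : ℕ → ℝ, ∃ z : ℕ → E, Tendsto t atTop (𝓝[>] 0) ∧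
      Tendsto z atTop (𝓝 v) ∧ ∀ᶠ m in atTop, a + t m • z m ∈ A := by
  have hv' : ‖v‖ ≠ 0 := norm_ne_zero_iff.2 hv
  constructor
  · rintro (hv0 | ⟨-, u, huA, hua, hu, hdir⟩)
    · exact absurd hv0 hv
    have hr : ∀ m, 0 < ‖u m - a‖ := fun m => norm_pos_iff.2 (sub_ne_zero.2 (hua m))
    refine ⟨fun m => ‖u m - a‖ / ‖v‖, fun m => ‖v‖ • ‖u m - a‖⁻¹ • (u m - a), ?_, ?_,
      Eventually.of_forall fun m => ?_⟩
    · refine tendsto_nhdsWithin_iff.2 ⟨?_, Eventually.of_forall fun m =>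
        div_pos (hr m) (norm_pos_iff.2 hv)⟩
      simpa using ((hu.sub_const a).norm).div_const ‖v‖
    · simpa [smul_inv_smul₀ hv'] using hdir.const_smul ‖v‖
    · have hscal : (‖u m - a‖ / ‖v‖) • ‖v‖ • ‖u m - a‖⁻¹ • (u m - a) = u m - a := by
        rw [smul_smul, smul_smul, div_mul_cancel₀ _ hv', mul_inv_cancel₀ (hr m).ne', one_smul]
      rw [hscal, add_sub_cancel]
      exact huA m
  · rintro ⟨t, z, ht, hz, hA⟩
    have htpos : ∀ᶠ m in atTop, 0 < t m := (tendsto_nhdsWithin_iff.1 ht).2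
    obtain ⟨N, hN⟩ := eventually_atTop.1 (hA.and (htpos.and (hz.eventually_ne hv)))
    refine Or.inr ⟨hv, fun m => a + t (m + N) • z (m + N), fun m => (hN _ le_add_self).1,
      fun m hm => ?_, ?_, ?_⟩
    · obtain ⟨-, htm, hzm⟩ := hN (m + N) le_add_self
      exact smul_ne_zero htm.ne' hzm (add_eq_left.1 hm)
    · exact (tendsto_add_atTop_iff_nat N).2
        (tendsto_add_smul_nhds (ht.mono_right nhdsWithin_le_nhds) hz)
    · refine (tendsto_add_atTop_iff_nat N (f := fun k => ‖a + t k • z k - a‖⁻¹ •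
        (a + t k • z k - a))).2 (((hz.norm.inv₀ hv').smul hz).congr' ?_)
      filter_upwards [htpos] with k hk
      rw [add_sub_cancel_left, norm_smul, Real.norm_of_nonneg hk.le, smul_smul, mul_inv_rev,
        inv_mul_cancel_right₀ hk.ne']

theorem bouligand_congr {A A' : Set E} {a : E} (h : A =ᶠ[𝓝 a] A') :
    bouligand A a = bouligand A' a := by
  ext v
  rcases eq_or_ne v 0 with rfl | hv
  · exact iff_of_true (Or.inl rfl) (Or.inl rfl)
  simp only [mem_bouligand_iff hv]
  refine exists₂_congr fun t z => and_congr_right fun ht => and_congr_right fun hz =>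
    eventually_congr ?_
  exact (tendsto_add_smul_nhds (ht.mono_right nhdsWithin_le_nhds) hz).eventually
    (eventuallyEq_set.1 h)

theorem mem_feasible_iff {A : Set E} {a v : E} :
    v ∈ feasible A a ↔ ∀ᶠ t in 𝓝[>] (0 : ℝ), a + t • v ∈ A :=
  mem_nhdsGT_iff_exists_Ioo_subset.symm

theorem feasible_congr {A A' : Set E} {a : E} (h : A =ᶠ[𝓝 a] A') :
    feasible A a = feasible A' a := by
  ext v
  simp only [mem_feasible_iff]
  have hray : Tendsto (fun t : ℝ => a + t • v) (𝓝[>] 0) (𝓝 a) :=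
    tendsto_add_smul_nhds (tendsto_id.mono_left nhdsWithin_le_nhds) tendsto_const_nhds
  exact eventually_congr (hray.eventually (eventuallyEq_set.1 h))

theorem LipschitzWith.tendsto_div_of_tendsto_nhdsGT {γ : E → ℝ} {K : NNReal}
    (hγ : LipschitzWith K γ) {x' v : E} {c : ℝ}
    (hc : Tendsto (fun t : ℝ => (γ (x' + t • v) - γ x') / t) (𝓝[>] 0) (𝓝 c))
    {α : Type*} {l : Filter α} {t : α → ℝ} {z : α → E}
    (ht : Tendsto t l (𝓝[>] 0)) (hz : Tendsto z l (𝓝 v)) :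
    Tendsto (fun m => (γ (x' + t m • z m) - γ x') / t m) l (𝓝 c) := by
  have hdiff : Tendsto (fun m => (γ (x' + t m • z m) - γ (x' + t m • v)) / t m) l (𝓝 0) := by
    have hbound : Tendsto (fun m => K * dist (z m) v) l (𝓝 0) := by
      simpa using (hz.dist (tendsto_const_nhds (x := v))).const_mul (K : ℝ)
    refine squeeze_zero_norm' ?_ hbound
    filter_upwards [(tendsto_nhdsWithin_iff.1 ht).2] with m (hm : 0 < t m)
    rw [norm_div, Real.norm_of_nonneg hm.le, div_le_iff₀ hm, ← dist_eq_norm]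
    calc dist (γ (x' + t m • z m)) (γ (x' + t m • v))
        ≤ K * dist (x' + t m • z m) (x' + t m • v) := hγ.dist_le_mul _ _
      _ = K * dist (z m) v * t m := by
        rw [dist_add_left, dist_smul₀, Real.norm_of_nonneg hm.le]; ring
  have hsum := hdiff.add (hc.comp ht)
  rw [zero_add] at hsum
  refine hsum.congr fun m => ?_
  simp only [Function.comp_apply]
  ring

end Cones

section TangentCones

variable {n : ℕ} {γ g : EuclideanSpace ℝ (Fin n) → ℝ} {x : EuclideanSpace ℝ (Fin n) × ℝ}

theorem bouligand_epi {K : NNReal} (hγ : LipschitzWith K γ) (hx : x.2 = γ x.1)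
    (hg : ∀ v', Tendsto (fun t : ℝ => (γ (x.1 + t • v') - γ x.1) / t) (𝓝[>] 0) (𝓝 (g v'))) :
    bouligand (epi γ) x = epi g := by
  ext v
  rcases eq_or_ne v 0 with rfl | hv
  · have hg0 : g 0 = 0 := tendsto_nhds_unique (hg 0) (by simp)
    exact iff_of_true (Or.inl rfl) (show g 0 ≤ 0 from hg0.le)
  rw [mem_bouligand_iff hv]
  constructor
  · rintro ⟨t, z, ht, hz, hmem⟩
    refine le_of_tendsto_of_tendsto
      (hγ.tendsto_div_of_tendsto_nhdsGT (hg v.1) ht hz.fst_nhds) hz.snd_nhds ?_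
    filter_upwards [hmem, (tendsto_nhdsWithin_iff.1 ht).2] with m hm htm
    exact (add_smul_mem_epi_iff hx htm).1 hm
  · intro hv1
    set q : ℝ → ℝ := fun t => (γ (x.1 + t • v.1) - γ x.1) / t
    have ht : Tendsto (fun m : ℕ => (m : ℝ)⁻¹) atTop (𝓝[>] 0) :=
      tendsto_inv_atTop_nhdsGT_zero.comp tendsto_natCast_atTop_atTop
    refine ⟨fun m => (m : ℝ)⁻¹, fun m => (v.1, v.2 + (q (m : ℝ)⁻¹ - g v.1)), ht, ?_, ?_⟩
    · have hq := (((hg v.1).comp ht).sub_const (g v.1)).const_add v.2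
      rw [sub_self, add_zero] at hq
      exact tendsto_const_nhds.prodMk_nhds hq
    · filter_upwards [(tendsto_nhdsWithin_iff.1 ht).2] with m hm
      rw [add_smul_mem_epi_iff hx hm]
      change q _ ≤ v.2 + (q _ - g v.1)
      linarith [show g v.1 ≤ v.2 from hv1]

theorem epiStrict_subset_feasible (hx : x.2 = γ x.1)
    (hg : ∀ v', Tendsto (fun t : ℝ => (γ (x.1 + t • v') - γ x.1) / t) (𝓝[>] 0) (𝓝 (g v'))) :
    epiStrict g ⊆ feasible (epiStrict γ) x := by
  intro v hv
  rw [mem_feasible_iff]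
  filter_upwards [(hg v.1).eventually_lt_const hv, self_mem_nhdsWithin] with t hq ht
  exact (add_smul_mem_epiStrict_iff hx ht).2 hq

theorem feasible_subset_epi (hx : x.2 = γ x.1)
    (hg : ∀ v', Tendsto (fun t : ℝ => (γ (x.1 + t • v') - γ x.1) / t) (𝓝[>] 0) (𝓝 (g v'))) :
    feasible (epiStrict γ) x ⊆ epi g := by
  intro v hv
  refine le_of_tendsto (hg v.1) ?_
  filter_upwards [mem_feasible_iff.1 hv, self_mem_nhdsWithin] with t hmem ht
  exact ((add_smul_mem_epiStrict_iff hx ht).1 hmem).le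

end TangentCones

theorem stmt_4_general (n : ℕ) (Ω : Set (EuclideanSpace ℝ (Fin n) × ℝ))
    (hΩ : IsOpen Ω)
    (x : EuclideanSpace ℝ (Fin n) × ℝ) (hx : x ∈ frontier Ω)
    (δ : ℝ) (hδ : 0 < δ) (K : NNReal) (γ : EuclideanSpace ℝ (Fin n) → ℝ)
    (hγ : LipschitzWith K γ)
    (hcl : closure Ω ∩ Metric.ball x δ = epi γ ∩ Metric.ball x δ)
    (hop : Ω ∩ Metric.ball x δ = epiStrict γ ∩ Metric.ball x δ)
    (g : EuclideanSpace ℝ (Fin n) → ℝ) (hgc : Continuous g)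
    (hg : ∀ v' : EuclideanSpace ℝ (Fin n),
      Tendsto (fun t : ℝ => (γ (x.1 + t • v') - γ x.1) / t) (𝓝[>] 0) (𝓝 (g v'))) :
    bouligand (closure Ω) x = closure (feasible Ω x) ∧
    interior (bouligand (closure Ω) x) = interior (feasible Ω x) ∧
    frontier (bouligand (closure Ω) x) = frontier (feasible Ω x) := by
  have hball := Metric.ball_mem_nhds x hδ
  have hxγ : x.2 = γ x.1 := by
    have hxepi : x ∈ epi γ ∩ Metric.ball x δ :=
      hcl ▸ ⟨frontier_subset_closure hx, mem_of_mem_nhds hball⟩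
    have hxΩ : x ∉ Ω := fun h => hx.2 (hΩ.interior_eq.symm ▸ h)
    refine le_antisymm (not_lt.1 fun h => hxΩ ?_) hxepi.1
    exact (hop.symm ▸ ⟨h, mem_of_mem_nhds hball⟩ : x ∈ Ω ∩ Metric.ball x δ).1
  rw [bouligand_congr (eventuallyEq_of_inter_eq hball hcl), bouligand_epi hγ hxγ hg,
    feasible_congr (eventuallyEq_of_inter_eq hball hop)]
  obtain ⟨hclF, hintF, hfrF⟩ := closure_interior_frontier_eq_of_subset_of_subset
    (epiStrict_subset_feasible hxγ hg) (feasible_subset_epi hxγ hg) (closure_epiStrict hgc)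
    (interior_epi hgc)
  exact ⟨hclF.symm, hintF.symm, hfrF.symm⟩

/-- at an LCDD boundary point `x` of an open set `Ω` in standard position, the
Bouligand tangent cone of `closure Ω` equals the closure of the open feasible direction cone,
their interiors coincide, and their topological frontiers coincide. -/
theorem stmt_4 (n : ℕ) (hn : 1 ≤ n) (Ω : Set (EuclideanSpace ℝ (Fin n) × ℝ))
    (hΩ : IsOpen Ω) (hbd : (frontier Ω).Nonempty)
    (x : EuclideanSpace ℝ (Fin n) × ℝ) (hx : x ∈ frontier Ω)
    (δ : ℝ) (hδ : 0 < δ) (K : NNReal) (γ : EuclideanSpace ℝ (Fin n) → ℝ)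
    (hγ : LipschitzWith K γ)
    (hcl : closure Ω ∩ Metric.ball x δ = epi γ ∩ Metric.ball x δ)
    (hop : Ω ∩ Metric.ball x δ = epiStrict γ ∩ Metric.ball x δ)
    (g : EuclideanSpace ℝ (Fin n) → ℝ) (hgc : Continuous g)
    (hg : ∀ v' : EuclideanSpace ℝ (Fin n),
      Tendsto (fun t : ℝ => (γ (x.1 + t • v') - γ x.1) / t) (𝓝[>] 0) (𝓝 (g v'))) :
    bouligand (closure Ω) x = closure (feasible Ω x) ∧
    interior (bouligand (closure Ω) x) = interior (feasible Ω x) ∧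
    frontier (bouligand (closure Ω) x) = frontier (feasible Ω x) :=
  stmt_4_general n Ω hΩ x hx δ hδ K γ hγ hcl hop g hgc hg
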